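/- Let u ∈ L^∞([0,T]×ℝ), let γ̄ : (t⁻,t⁺) → ℝ be an L-Lipschitz curve, and set v_δ(t) = (1/δ) ∫_0^δ |u(t, γ̄(t)+y) − u(t, γ̄(t))| dy. Then for every δ > 0 small: ∫_{t⁻}^{t⁺} v_δ(t) dt ≤ 2δ + ∫_{t⁻+δ}^{t⁺−δ} (1/(2δ²)) ∫_{B_{(2+L)δ}(t', γ̄(t'))} |u(z) − u(t', γ̄(t'))| dz dt' + ∫_{t⁻+δ}^{t⁺−δ} (1/(2δ)) ∫_{t−δ}^{t+δ} |u(t', γ̄(t')) − u(t, γ̄(t))| dt' dt, assuming 0 ≤ u ≤ 1. -/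

import Mathlib

open MeasureTheory Set Filter

def Eball (p : ℝ × ℝ) (r : ℝ) : Set (ℝ × ℝ) :=
  {z : ℝ × ℝ | (z.1 - p.1) ^ 2 + (z.2 - p.2) ^ 2 < r ^ 2}

lemma measurableSet_Eball (p : ℝ × ℝ) (r : ℝ) : MeasurableSet (Eball p r) := by
  apply measurableSet_lt _ measurable_const
  fun_prop

lemma Eball_subset (p : ℝ × ℝ) (r : ℝ) (hr : 0 < r) :
    Eball p r ⊆ Ioo (p.1 - r) (p.1 + r) ×ˢ Ioo (p.2 - r) (p.2 + r) := by
  rintro ⟨z1, z2⟩ hz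
  simp only [Eball, mem_setOf_eq] at hz
  constructor <;> constructor <;> nlinarith [sq_nonneg (z1 - p.1), sq_nonneg (z2 - p.2)]

lemma volume_Eball_le (p : ℝ × ℝ) (r : ℝ) (hr : 0 < r) :
    volume (Eball p r) ≤ ENNReal.ofReal (2*r) * ENNReal.ofReal (2*r) := by
  refine le_trans (measure_mono (Eball_subset p r hr)) ?_
  rw [Measure.volume_eq_prod, Measure.prod_prod]
  simp [Real.volume_Ioo]
  apply mul_le_mul' <;> (rw [← two_mul, ENNReal.ofReal_mul (by norm_num)]; simp)

lemma lint_shift (f : ℝ → ENNReal) (c a b : ℝ) :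
    ∫⁻ y in Ioo a b, f (y + c) = ∫⁻ x in Ioo (a+c) (b+c), f x := by
  rw [← lintegral_indicator measurableSet_Ioo, ← lintegral_indicator measurableSet_Ioo,
    ← lintegral_add_right_eq_self (fun x => (Ioo (a+c) (b+c)).indicator f x) c]
  congr 1; funext y
  by_cases h : y ∈ Ioo a b
  · rw [Set.indicator_of_mem h, Set.indicator_of_mem]
    simp only [mem_Ioo] at h ⊢; constructor <;> linarith [h.1, h.2]
  · rw [Set.indicator_of_notMem h, Set.indicator_of_notMem]
    simp only [mem_Ioo] at h ⊢; intro hc; exact h ⟨by linarith [hc.1], by linarith [hc.2]⟩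

lemma integrableOn_bdd {α : Type*} [MeasurableSpace α] {μ : Measure α} {s : Set α} {f : α → ℝ}
    (hf : AEStronglyMeasurable f (μ.restrict s)) (hb : ∀ x, |f x| ≤ 1) (hfin : μ s ≠ ⊤) :
    IntegrableOn f s μ := by
  refine Integrable.mono' (g := fun _ => (1:ℝ)) ?_ hf ?_
  · exact (integrableOn_const hfin : IntegrableOn (fun _ => (1:ℝ)) s μ)
  · exact Eventually.of_forall fun x => by simpa [Real.norm_eq_abs] using hb x

lemma ofReal_setIntegral_bdd {α : Type*} [MeasurableSpace α] {μ : Measure α} {s : Set α} {f : α → ℝ}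
    (hf : AEStronglyMeasurable f (μ.restrict s)) (h0 : ∀ x, 0 ≤ f x) (hb : ∀ x, f x ≤ 1)
    (hfin : μ s ≠ ⊤) :
    ENNReal.ofReal (∫ x in s, f x ∂μ) = ∫⁻ x in s, ENNReal.ofReal (f x) ∂μ :=
  ofReal_integral_eq_lintegral_ofReal
    (integrableOn_bdd hf (fun x => abs_le.2 ⟨by linarith [h0 x], hb x⟩) hfin)
    (Eventually.of_forall h0)

lemma weight (ρ : ℝ → ENNReal) (hρm : Measurable ρ) (hρ1 : ∀ t, ρ t ≤ 1)
    (tm tp δ : ℝ) (hδ : 0 < δ) (hsmall : tm + δ ≤ tp - δ) :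
    ∫⁻ t in Ioo tm tp, ρ t ≤ ENNReal.ofReal (2*δ) +
      ∫⁻ t' in Ioo (tm+δ) (tp-δ), (ENNReal.ofReal (2*δ))⁻¹ * ∫⁻ t in Ioo (t'-δ) (t'+δ), ρ t := by
  have ho2pos : ENNReal.ofReal (2*δ) ≠ 0 := by
    simp only [ne_eq, ENNReal.ofReal_eq_zero, not_le]; linarith
  have ho2top : ENNReal.ofReal (2*δ) ≠ ⊤ := ENNReal.ofReal_ne_top
  set o2 : ENNReal := ENNReal.ofReal (2*δ) with ho2
  set k : ℝ → ℝ → ENNReal := fun t' t => (Ioo (t'-δ) (t'+δ)).indicator (fun _ => 1) t with hk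
  have hSW : MeasurableSet {q : ℝ×ℝ | q.1 - δ < q.2 ∧ q.2 < q.1 + δ} := by
    have : {q : ℝ×ℝ | q.1 - δ < q.2 ∧ q.2 < q.1 + δ}
        = {q : ℝ×ℝ | q.1 - δ < q.2} ∩ {q : ℝ×ℝ | q.2 < q.1 + δ} := rfl
    rw [this]
    exact (measurableSet_lt (measurable_fst.sub measurable_const) measurable_snd).inter
      (measurableSet_lt measurable_snd (measurable_fst.add measurable_const))
  have hkmeas : Measurable (Function.uncurry k) := by
    have heq : Function.uncurry k
        = Set.indicator {q : ℝ×ℝ | q.1 - δ < q.2 ∧ q.2 < q.1 + δ} (fun _ => 1) := by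
      funext q; rcases q with ⟨t', t⟩
      simp [Function.uncurry, hk, Set.indicator_apply, Set.mem_Ioo, mem_setOf_eq]
    rw [heq]; exact measurable_const.indicator hSW
  have hksymm : ∀ t' t, k t' t = (Ioo (t-δ) (t+δ)).indicator (fun _ => 1) t' := by
    intro t' t
    simp only [hk, Set.indicator_apply, Set.mem_Ioo]
    refine if_congr ⟨fun h => ⟨by linarith [h.1, h.2], by linarith [h.1, h.2]⟩,
      fun h => ⟨by linarith [h.1, h.2], by linarith [h.1, h.2]⟩⟩ rfl rfl
  set m : ℝ → ENNReal := fun t => ∫⁻ t' in Ioo (tm+δ) (tp-δ), k t' t with hm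
  have hm_meas : Measurable m := by
    apply Measurable.lintegral_prod_right' (f := fun q : ℝ × ℝ => k q.2 q.1)
    exact hkmeas.comp measurable_swap
  have hm_le : ∀ t, m t ≤ o2 := by
    intro t
    calc m t = ∫⁻ t' in Ioo (tm+δ) (tp-δ), (Ioo (t-δ) (t+δ)).indicator (fun _ => 1) t' := by
          simp only [hm, hksymm]
      _ ≤ ∫⁻ t', (Ioo (t-δ) (t+δ)).indicator (fun _ => 1) t' := setLIntegral_le_lintegral _ _
      _ = volume (Ioo (t-δ) (t+δ)) := lintegral_indicator_one measurableSet_Ioo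
      _ = o2 := by rw [Real.volume_Ioo, ho2]; congr 1; ring
  set a : ℝ → ENNReal := fun t => o2⁻¹ * m t with ha
  have ha_meas : Measurable a := hm_meas.const_mul _
  have ha1 : ∀ t, a t ≤ 1 := fun t => by
    calc a t ≤ o2⁻¹ * o2 := mul_le_mul_right (hm_le t) _
      _ = 1 := ENNReal.inv_mul_cancel ho2pos ho2top
  -- pointwise
  have hpt : ∀ t, ρ t ≤ a t * ρ t + (1 - a t) := by
    intro t
    have h1a : a t + (1 - a t) = 1 := add_tsub_cancel_of_le (ha1 t)
    calc ρ t = (a t + (1 - a t)) * ρ t := by rw [h1a, one_mul]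
      _ = a t * ρ t + (1 - a t) * ρ t := by rw [add_mul]
      _ ≤ a t * ρ t + (1 - a t) * 1 := by gcongr; exact hρ1 t
      _ = a t * ρ t + (1 - a t) := by rw [mul_one]
  -- the swap identity
  have hswap : ∫⁻ t in Ioo tm tp, m t = ∫⁻ t' in Ioo (tm+δ) (tp-δ), ∫⁻ t in Ioo tm tp, k t' t := by
    simp only [hm]
    exact lintegral_lintegral_swap ((hkmeas.comp measurable_swap).aemeasurable)
  -- inner value for t' in mid
  have hinner : ∀ t' ∈ Ioo (tm+δ) (tp-δ), (∫⁻ t in Ioo tm tp, k t' t) = o2 := by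
    intro t' ht'
    have hsub : Ioo (t'-δ) (t'+δ) ⊆ Ioo tm tp := by
      intro x hx; simp only [mem_Ioo] at *
      constructor <;> [linarith [ht'.1, hx.1]; linarith [ht'.2, hx.2]]
    calc (∫⁻ t in Ioo tm tp, k t' t)
        = volume.restrict (Ioo tm tp) (Ioo (t'-δ) (t'+δ)) := by
          rw [show (fun t => k t' t) = (Ioo (t'-δ) (t'+δ)).indicator (fun _ => 1) from rfl]
          exact lintegral_indicator_one measurableSet_Ioo
      _ = volume (Ioo (t'-δ) (t'+δ) ∩ Ioo tm tp) := Measure.restrict_apply measurableSet_Ioo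
      _ = volume (Ioo (t'-δ) (t'+δ)) := by rw [inter_eq_self_of_subset_left hsub]
      _ = o2 := by rw [Real.volume_Ioo, ho2]; congr 1; ring
  have hIm : ∫⁻ t in Ioo tm tp, m t = o2 * ENNReal.ofReal (tp - tm - 2*δ) := by
    rw [hswap, setLIntegral_congr_fun measurableSet_Ioo hinner,
      setLIntegral_const, Real.volume_Ioo]
    ring_nf
  -- bound for the (1 - a) part
  have hIa : ∫⁻ t in Ioo tm tp, a t = ENNReal.ofReal (tp - tm - 2*δ) := by
    rw [show (fun t => a t) = fun t => o2⁻¹ * m t from rfl, lintegral_const_mul _ hm_meas, hIm,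
      ← mul_assoc, ENNReal.inv_mul_cancel ho2pos ho2top, one_mul]
  have hB1 : ∫⁻ t in Ioo tm tp, (1 - a t) ≤ o2 := by
    have hfin : ∫⁻ t in Ioo tm tp, a t ≠ ⊤ := by rw [hIa]; exact ENNReal.ofReal_ne_top
    rw [lintegral_sub ha_meas hfin (Eventually.of_forall fun t => ha1 t)]
    rw [hIa, lintegral_one, Measure.restrict_apply MeasurableSet.univ, univ_inter, Real.volume_Ioo]
    rw [← ENNReal.ofReal_sub _ (by linarith : (0:ℝ) ≤ tp - tm - 2*δ)]
    apply ENNReal.ofReal_le_ofReal; linarith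
  -- bound for the a*ρ part
  have hkρ : ∀ t', (∫⁻ t in Ioo (t'-δ) (t'+δ), ρ t) = ∫⁻ t, k t' t * ρ t := by
    intro t'
    rw [← lintegral_indicator measurableSet_Ioo]
    congr 1; funext t
    simp only [hk, Set.indicator_apply]; by_cases h : t ∈ Ioo (t'-δ) (t'+δ) <;> simp [h]
  have hmeas_inner : Measurable fun t' => ∫⁻ t, k t' t * ρ t := by
    apply Measurable.lintegral_prod_right' (f := fun q : ℝ × ℝ => k q.1 q.2 * ρ q.2)
    exact hkmeas.mul (hρm.comp measurable_snd)
  have hB2 : ∫⁻ t in Ioo tm tp, a t * ρ t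
      ≤ ∫⁻ t' in Ioo (tm+δ) (tp-δ), o2⁻¹ * ∫⁻ t in Ioo (t'-δ) (t'+δ), ρ t := by
    have hswap2 : ∫⁻ t' in Ioo (tm+δ) (tp-δ), ∫⁻ t, k t' t * ρ t = ∫⁻ t, m t * ρ t := by
      rw [lintegral_lintegral_swap]
      · congr 1; funext t
        have hkt : Measurable fun t' => k t' t := by
          rw [show (fun t' => k t' t) = (Ioo (t-δ) (t+δ)).indicator (fun _ => 1)
            from funext fun t' => hksymm t' t]
          exact measurable_const.indicator measurableSet_Ioo
        rw [hm, ← lintegral_mul_const _ hkt]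
      · exact ((hkmeas.mul (hρm.comp measurable_snd))).aemeasurable
    calc ∫⁻ t in Ioo tm tp, a t * ρ t
        ≤ ∫⁻ t, a t * ρ t := setLIntegral_le_lintegral _ _
      _ = o2⁻¹ * ∫⁻ t, m t * ρ t := by
          rw [← lintegral_const_mul _ (f := fun t => m t * ρ t) (hm_meas.mul hρm)]
          congr 1; funext t; rw [ha, mul_assoc]
      _ = o2⁻¹ * ∫⁻ t' in Ioo (tm+δ) (tp-δ), ∫⁻ t, k t' t * ρ t := by rw [hswap2]
      _ = ∫⁻ t' in Ioo (tm+δ) (tp-δ), o2⁻¹ * ∫⁻ t, k t' t * ρ t := by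
          rw [lintegral_const_mul _ hmeas_inner]
      _ = ∫⁻ t' in Ioo (tm+δ) (tp-δ), o2⁻¹ * ∫⁻ t in Ioo (t'-δ) (t'+δ), ρ t := by
          congr 1; funext t'; rw [hkρ]
  calc ∫⁻ t in Ioo tm tp, ρ t
      ≤ ∫⁻ t in Ioo tm tp, (a t * ρ t + (1 - a t)) := lintegral_mono hpt
    _ = (∫⁻ t in Ioo tm tp, a t * ρ t) + ∫⁻ t in Ioo tm tp, (1 - a t) :=
        lintegral_add_left (ha_meas.mul hρm) _
    _ ≤ (∫⁻ t' in Ioo (tm+δ) (tp-δ), o2⁻¹ * ∫⁻ t in Ioo (t'-δ) (t'+δ), ρ t) + o2 :=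
        add_le_add hB2 hB1
    _ = o2 + ∫⁻ t' in Ioo (tm+δ) (tp-δ), o2⁻¹ * ∫⁻ t in Ioo (t'-δ) (t'+δ), ρ t := add_comm _ _
lemma ballstep (u : ℝ×ℝ→ℝ) (hmeas : Measurable u) (γ : ℝ → ℝ) (hγm : Measurable γ)
    (L δ : ℝ) (hL : 0 ≤ L) (hδ : 0 < δ)
    (hlip : ∀ s t : ℝ, |γ s - γ t| ≤ L * |s - t|) (t' : ℝ) :
    ∫⁻ t in Ioo (t'-δ) (t'+δ), (∫⁻ y in Ioo 0 δ, ENNReal.ofReal |u (t, γ t + y) - u (t', γ t')|)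
      ≤ ∫⁻ z in Eball (t', γ t') ((2+L)*δ), ENNReal.ofReal |u z - u (t', γ t')| := by
  set c : ℝ×ℝ := (t', γ t') with hc
  set r : ℝ := (2+L)*δ with hr
  set g : ℝ×ℝ → ENNReal := fun z => ENNReal.ofReal |u z - u c| with hg
  have hgmeas : Measurable g := ((hmeas.sub measurable_const).abs).ennreal_ofReal
  have hindmeas : Measurable ((Eball c r).indicator g) := hgmeas.indicator (measurableSet_Eball _ _)
  have hgeo : ∀ t x, t ∈ Ioo (t'-δ) (t'+δ) → x ∈ Ioo (γ t) (γ t + δ) → (t,x) ∈ Eball c r := by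
    intro t x ht hx
    simp only [Eball, mem_setOf_eq, hc, hr]
    simp only [mem_Ioo] at ht hx
    have h1 : |t - t'| < δ := abs_lt.2 ⟨by linarith [ht.1], by linarith [ht.2]⟩
    have h2 : |γ t - γ t'| ≤ L * |t - t'| := hlip t t'
    have h3 : |x - γ t'| ≤ |x - γ t| + |γ t - γ t'| := abs_sub_le _ _ _
    have h4 : |x - γ t| < δ := abs_lt.2 ⟨by linarith [hx.1], by linarith [hx.2]⟩
    have h5 : |x - γ t'| < (1+L)*δ := by nlinarith [abs_nonneg (t - t'), abs_nonneg (γ t - γ t')]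
    nlinarith [abs_nonneg (t - t'), abs_nonneg (x - γ t'), sq_abs (t-t'), sq_abs (x - γ t')]
  have hshift : ∀ t, (∫⁻ y in Ioo 0 δ, g (t, γ t + y)) = ∫⁻ x in Ioo (γ t) (γ t + δ), g (t, x) := by
    intro t
    have h := lint_shift (fun x => g (t, x)) (γ t) 0 δ
    rw [zero_add, add_comm δ (γ t)] at h
    rw [← h]
    congr 1; funext y; rw [add_comm]
  calc ∫⁻ t in Ioo (t'-δ) (t'+δ), (∫⁻ y in Ioo 0 δ, g (t, γ t + y))
      = ∫⁻ t in Ioo (t'-δ) (t'+δ), ∫⁻ x, (Ioo (γ t) (γ t+δ)).indicator (fun x => g (t,x)) x := by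
        refine lintegral_congr fun t => ?_
        rw [hshift t, lintegral_indicator measurableSet_Ioo]
    _ ≤ ∫⁻ t in Ioo (t'-δ) (t'+δ), ∫⁻ x, (Eball c r).indicator g (t, x) := by
        refine setLIntegral_mono (Measurable.lintegral_prod_right' hindmeas) fun t ht => ?_
        refine lintegral_mono fun x => ?_
        by_cases hx : x ∈ Ioo (γ t) (γ t + δ)
        · rw [Set.indicator_of_mem hx, Set.indicator_of_mem (hgeo t x ht hx)]
        · rw [Set.indicator_of_notMem hx]; exact zero_le
    _ ≤ ∫⁻ t, ∫⁻ x, (Eball c r).indicator g (t, x) := setLIntegral_le_lintegral _ _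
    _ = ∫⁻ z, (Eball c r).indicator g z := by
        rw [Measure.volume_eq_prod (α := ℝ) (β := ℝ)]
        exact (lintegral_prod _ hindmeas.aemeasurable).symm
    _ = ∫⁻ z in Eball c r, g z := lintegral_indicator (measurableSet_Eball _ _) _
lemma main_aux (u : ℝ × ℝ → ℝ) (hmeas : Measurable u)
    (h0 : ∀ p, 0 ≤ u p) (h1 : ∀ p, u p ≤ 1)
    (tm tp L δ : ℝ) (hL : 0 ≤ L) (hδ : 0 < δ) (hsmall : tm + δ ≤ tp - δ)
    (γ : ℝ → ℝ) (hγ : LipschitzWith (Real.toNNReal L) γ) :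
    (∫ t in Set.Ioo tm tp,
        (1 / δ) * ∫ y in Set.Ioo (0 : ℝ) δ, |u (t, γ t + y) - u (t, γ t)|)
      ≤ 2 * δ
        + (∫ t' in Set.Ioo (tm + δ) (tp - δ),
            (1 / (2 * δ ^ 2)) *
              ∫ z in Eball (t', γ t') ((2 + L) * δ), |u z - u (t', γ t')|)
        + ∫ t in Set.Ioo (tm + δ) (tp - δ),
            (1 / (2 * δ)) *
              ∫ t' in Set.Ioo (t - δ) (t + δ), |u (t', γ t') - u (t, γ t)| := by
  have hγm : Measurable γ := hγ.continuous.measurable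
  have hlip : ∀ s t : ℝ, |γ s - γ t| ≤ L * |s - t| := by
    intro s t
    have h := hγ.dist_le_mul s t
    rwa [Real.dist_eq, Real.dist_eq, Real.coe_toNNReal L hL] at h
  have habs : ∀ z p : ℝ × ℝ, |u z - u p| ≤ 1 := fun z p =>
    abs_le.2 ⟨by linarith [h0 z, h1 p], by linarith [h1 z, h0 p]⟩
  have habs' : ∀ z p : ℝ × ℝ, ENNReal.ofReal |u z - u p| ≤ 1 := fun z p =>
    ENNReal.ofReal_le_one.2 (habs z p)
  set r : ℝ := (2 + L) * δ with hrdef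
  have hrpos : 0 < r := by positivity
  have hoδ0 : ENNReal.ofReal δ ≠ 0 := by
    simp only [ne_eq, ENNReal.ofReal_eq_zero, not_le]; linarith
  have hoδtop : ENNReal.ofReal δ ≠ ⊤ := ENNReal.ofReal_ne_top
  have ho20 : ENNReal.ofReal (2*δ) ≠ 0 := by
    simp only [ne_eq, ENNReal.ofReal_eq_zero, not_le]; linarith
  have ho2top : ENNReal.ofReal (2*δ) ≠ ⊤ := ENNReal.ofReal_ne_top
  -- basic measurable functions
  have m1 : Measurable fun q : ℝ×ℝ => u (q.1, γ q.1 + q.2) :=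
    hmeas.comp (measurable_fst.prodMk ((hγm.comp measurable_fst).add measurable_snd))
  have m2 : Measurable fun q : ℝ×ℝ => u (q.1, γ q.1) :=
    hmeas.comp (measurable_fst.prodMk (hγm.comp measurable_fst))
  have m3 : Measurable fun q : ℝ×ℝ => u (q.2, γ q.2) :=
    hmeas.comp (measurable_snd.prodMk (hγm.comp measurable_snd))
  have mcurve : Measurable fun t : ℝ => u (t, γ t) :=
    hmeas.comp (measurable_id.prodMk hγm)
  -- local notation
  set φ : ℝ → ENNReal :=
    fun t => ∫⁻ y in Ioo (0:ℝ) δ, ENNReal.ofReal |u (t, γ t + y) - u (t, γ t)| with hφdef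
  set ρ : ℝ → ENNReal := fun t => (ENNReal.ofReal δ)⁻¹ * φ t with hρdef
  set B : ℝ → ENNReal :=
    fun t' => ∫⁻ z in Eball (t', γ t') r, ENNReal.ofReal |u z - u (t', γ t')| with hBdef
  set G : ℝ → ENNReal :=
    fun t => ∫⁻ t' in Ioo (t-δ) (t+δ), ENNReal.ofReal |u (t', γ t') - u (t, γ t)| with hGdef
  -- measurability of φ and ρ
  have hφF : Measurable fun q : ℝ×ℝ => ENNReal.ofReal |u (q.1, γ q.1 + q.2) - u (q.1, γ q.1)| :=
    ((m1.sub m2).abs).ennreal_ofReal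
  have hφmeas : Measurable φ := Measurable.lintegral_prod_right' hφF
  have hφ_le : ∀ t, φ t ≤ ENNReal.ofReal δ := by
    intro t
    calc φ t ≤ ∫⁻ _ in Ioo (0:ℝ) δ, 1 := lintegral_mono fun y => habs' _ _
      _ = volume (Ioo (0:ℝ) δ) := setLIntegral_one _
      _ = ENNReal.ofReal δ := by rw [Real.volume_Ioo, sub_zero]
  have hρmeas : Measurable ρ := hφmeas.const_mul _
  have hρ1 : ∀ t, ρ t ≤ 1 := by
    intro t
    calc ρ t ≤ (ENNReal.ofReal δ)⁻¹ * ENNReal.ofReal δ := mul_le_mul_right (hφ_le t) _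
      _ = 1 := ENNReal.inv_mul_cancel hoδ0 hoδtop
  -- measurability of B
  have hSball : MeasurableSet {q : ℝ × (ℝ×ℝ) | (q.2.1 - q.1)^2 + (q.2.2 - γ q.1)^2 < r^2} := by
    apply measurableSet_lt _ measurable_const
    apply Measurable.add
    · exact (((measurable_fst.comp measurable_snd).sub measurable_fst).pow_const 2)
    · exact (((measurable_snd.comp measurable_snd).sub (hγm.comp measurable_fst)).pow_const 2)
  have hFball : Measurable fun q : ℝ × (ℝ×ℝ) => |u q.2 - u (q.1, γ q.1)| :=
    ((hmeas.comp measurable_snd).sub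
      (hmeas.comp ((measurable_fst.prodMk (hγm.comp measurable_fst))))).abs
  have hBmeas : Measurable B := by
    have key : Measurable fun q : ℝ × (ℝ×ℝ) =>
        Set.indicator {q : ℝ × (ℝ×ℝ) | (q.2.1 - q.1)^2 + (q.2.2 - γ q.1)^2 < r^2}
          (fun q => ENNReal.ofReal |u q.2 - u (q.1, γ q.1)|) q :=
      Measurable.indicator (hFball.ennreal_ofReal) hSball
    have h2' : Measurable fun t' : ℝ => ∫⁻ z : ℝ×ℝ,
        Set.indicator {q : ℝ × (ℝ×ℝ) | (q.2.1 - q.1)^2 + (q.2.2 - γ q.1)^2 < r^2}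
          (fun q => ENNReal.ofReal |u q.2 - u (q.1, γ q.1)|) (t', z) :=
      Measurable.lintegral_prod_right' key
    have heq : B = fun t' : ℝ => ∫⁻ z : ℝ×ℝ,
        Set.indicator {q : ℝ × (ℝ×ℝ) | (q.2.1 - q.1)^2 + (q.2.2 - γ q.1)^2 < r^2}
          (fun q => ENNReal.ofReal |u q.2 - u (q.1, γ q.1)|) (t', z) := by
      funext t'
      rw [show B t' = ∫⁻ z in Eball (t', γ t') r, ENNReal.ofReal |u z - u (t', γ t')| from rfl,
        ← lintegral_indicator (measurableSet_Eball (t', γ t') r)]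
      congr 1
    rw [heq]; exact h2'
  -- measurability of G
  have hSW : MeasurableSet {q : ℝ×ℝ | q.1 - δ < q.2 ∧ q.2 < q.1 + δ} := by
    have : {q : ℝ×ℝ | q.1 - δ < q.2 ∧ q.2 < q.1 + δ}
        = {q : ℝ×ℝ | q.1 - δ < q.2} ∩ {q : ℝ×ℝ | q.2 < q.1 + δ} := rfl
    rw [this]
    exact (measurableSet_lt (measurable_fst.sub measurable_const) measurable_snd).inter
      (measurableSet_lt measurable_snd (measurable_fst.add measurable_const))
  have hGmeas : Measurable G := by
    have key : Measurable fun q : ℝ×ℝ =>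
        Set.indicator {q : ℝ×ℝ | q.1 - δ < q.2 ∧ q.2 < q.1 + δ}
          (fun q => ENNReal.ofReal |u (q.2, γ q.2) - u (q.1, γ q.1)|) q :=
      Measurable.indicator ((m3.sub m2).abs.ennreal_ofReal) hSW
    have h2' : Measurable fun t : ℝ => ∫⁻ t' : ℝ,
        Set.indicator {q : ℝ×ℝ | q.1 - δ < q.2 ∧ q.2 < q.1 + δ}
          (fun q => ENNReal.ofReal |u (q.2, γ q.2) - u (q.1, γ q.1)|) (t, t') :=
      Measurable.lintegral_prod_right' key
    have heq : G = fun t : ℝ => ∫⁻ t' : ℝ,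
        Set.indicator {q : ℝ×ℝ | q.1 - δ < q.2 ∧ q.2 < q.1 + δ}
          (fun q => ENNReal.ofReal |u (q.2, γ q.2) - u (q.1, γ q.1)|) (t, t') := by
      funext t
      rw [show G t = ∫⁻ t' in Ioo (t-δ) (t+δ), ENNReal.ofReal |u (t', γ t') - u (t, γ t)| from rfl,
        ← lintegral_indicator measurableSet_Ioo]
      congr 1
    rw [heq]; exact h2'
  -- conversion of the LHS
  have hsm_inner : StronglyMeasurable fun t => ∫ y in Ioo (0:ℝ) δ, |u (t, γ t + y) - u (t, γ t)| :=
    StronglyMeasurable.integral_prod_right' (((m1.sub m2).abs).stronglyMeasurable)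
  have hinner_nonneg : ∀ t, 0 ≤ ∫ y in Ioo (0:ℝ) δ, |u (t, γ t + y) - u (t, γ t)| :=
    fun t => integral_nonneg fun y => abs_nonneg _
  have hconv_inner : ∀ t,
      ENNReal.ofReal (∫ y in Ioo (0:ℝ) δ, |u (t, γ t + y) - u (t, γ t)|) = φ t := by
    intro t
    refine ofReal_setIntegral_bdd ?_ (fun y => abs_nonneg _) (fun y => habs _ _) ?_
    · exact (((hmeas.comp (measurable_const.prodMk (measurable_const.add measurable_id))).sub
        measurable_const).abs).aestronglyMeasurable
    · rw [Real.volume_Ioo]; exact ENNReal.ofReal_ne_top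
  have hconv1 : (∫ t in Ioo tm tp, (1/δ) * ∫ y in Ioo (0:ℝ) δ, |u (t, γ t + y) - u (t, γ t)|)
      = (∫⁻ t in Ioo tm tp, ρ t).toReal := by
    rw [integral_eq_lintegral_of_nonneg_ae
      (Eventually.of_forall fun t => mul_nonneg (by positivity) (hinner_nonneg t))
      ((stronglyMeasurable_const.mul hsm_inner).aestronglyMeasurable)]
    congr 1
    refine lintegral_congr fun t => ?_
    rw [ENNReal.ofReal_mul (by positivity : (0:ℝ) ≤ 1/δ), hconv_inner t, one_div,
      ENNReal.ofReal_inv_of_pos hδ]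
  -- conversion of the ball term
  have hIB_sm : StronglyMeasurable fun t' => ∫ z in Eball (t', γ t') r, |u z - u (t', γ t')| := by
    have key : StronglyMeasurable fun q : ℝ × (ℝ×ℝ) =>
        Set.indicator {q : ℝ × (ℝ×ℝ) | (q.2.1 - q.1)^2 + (q.2.2 - γ q.1)^2 < r^2}
          (fun q => |u q.2 - u (q.1, γ q.1)|) q :=
      (hFball.indicator hSball).stronglyMeasurable
    have h2' := StronglyMeasurable.integral_prod_right' (ν := (volume : Measure (ℝ×ℝ))) key
    have heq : (fun t' => ∫ z in Eball (t', γ t') r, |u z - u (t', γ t')|)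
        = fun t' => ∫ z, Set.indicator {q : ℝ × (ℝ×ℝ) | (q.2.1 - q.1)^2 + (q.2.2 - γ q.1)^2 < r^2}
            (fun q => |u q.2 - u (q.1, γ q.1)|) (t', z) := by
      funext t'
      rw [← integral_indicator (measurableSet_Eball (t', γ t') r)]
      congr 1
    rw [heq]; exact h2'
  have hball_fin : ∀ p : ℝ×ℝ, volume (Eball p r) ≠ ⊤ := by
    intro p
    refine ne_top_of_le_ne_top ?_ (volume_Eball_le p r hrpos)
    exact ENNReal.mul_ne_top ENNReal.ofReal_ne_top ENNReal.ofReal_ne_top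
  have hconv_ball : ∀ t',
      ENNReal.ofReal (∫ z in Eball (t', γ t') r, |u z - u (t', γ t')|) = B t' := by
    intro t'
    exact ofReal_setIntegral_bdd ((hmeas.sub measurable_const).abs).aestronglyMeasurable
      (fun z => abs_nonneg _) (fun z => habs _ _) (hball_fin _)
  have hXconv : (∫ t' in Ioo (tm+δ) (tp-δ),
        (1/(2*δ^2)) * ∫ z in Eball (t', γ t') r, |u z - u (t', γ t')|)
      = (∫⁻ t' in Ioo (tm+δ) (tp-δ), ENNReal.ofReal (1/(2*δ^2)) * B t').toReal := by
    rw [integral_eq_lintegral_of_nonneg_ae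
      (Eventually.of_forall fun t' =>
        mul_nonneg (by positivity) (integral_nonneg fun z => abs_nonneg _))
      ((stronglyMeasurable_const.mul hIB_sm).aestronglyMeasurable)]
    congr 1
    refine lintegral_congr fun t' => ?_
    rw [ENNReal.ofReal_mul (by positivity : (0:ℝ) ≤ 1/(2*δ^2)), hconv_ball t']
  -- conversion of the time term
  have hIY_sm : StronglyMeasurable fun t => ∫ t' in Ioo (t-δ) (t+δ), |u (t', γ t') - u (t, γ t)| := by
    have key : StronglyMeasurable fun q : ℝ×ℝ =>
        Set.indicator {q : ℝ×ℝ | q.1 - δ < q.2 ∧ q.2 < q.1 + δ}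
          (fun q => |u (q.2, γ q.2) - u (q.1, γ q.1)|) q :=
      (((m3.sub m2).abs).indicator hSW).stronglyMeasurable
    have h2' := StronglyMeasurable.integral_prod_right' (ν := (volume : Measure ℝ)) key
    have heq : (fun t => ∫ t' in Ioo (t-δ) (t+δ), |u (t', γ t') - u (t, γ t)|)
        = fun t => ∫ t', Set.indicator {q : ℝ×ℝ | q.1 - δ < q.2 ∧ q.2 < q.1 + δ}
            (fun q => |u (q.2, γ q.2) - u (q.1, γ q.1)|) (t, t') := by
      funext t
      rw [← integral_indicator measurableSet_Ioo]
      congr 1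
    rw [heq]; exact h2'
  have hconv_Y : ∀ t,
      ENNReal.ofReal (∫ t' in Ioo (t-δ) (t+δ), |u (t', γ t') - u (t, γ t)|) = G t := by
    intro t
    refine ofReal_setIntegral_bdd ((mcurve.sub measurable_const).abs).aestronglyMeasurable
      (fun z => abs_nonneg _) (fun z => habs _ _) ?_
    rw [Real.volume_Ioo]; exact ENNReal.ofReal_ne_top
  have hYconv : (∫ t in Ioo (tm+δ) (tp-δ),
        (1/(2*δ)) * ∫ t' in Ioo (t-δ) (t+δ), |u (t', γ t') - u (t, γ t)|)
      = (∫⁻ t in Ioo (tm+δ) (tp-δ), (ENNReal.ofReal (2*δ))⁻¹ * G t).toReal := by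
    rw [integral_eq_lintegral_of_nonneg_ae
      (Eventually.of_forall fun t =>
        mul_nonneg (by positivity) (integral_nonneg fun z => abs_nonneg _))
      ((stronglyMeasurable_const.mul hIY_sm).aestronglyMeasurable)]
    congr 1
    refine lintegral_congr fun t => ?_
    rw [ENNReal.ofReal_mul (by positivity : (0:ℝ) ≤ 1/(2*δ)), hconv_Y t, one_div,
      ENNReal.ofReal_inv_of_pos (by positivity : (0:ℝ) < 2*δ)]
  -- per-center estimate
  have hAmeas : ∀ t' : ℝ, Measurable fun t =>
      ∫⁻ y in Ioo (0:ℝ) δ, ENNReal.ofReal |u (t, γ t + y) - u (t', γ t')| := by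
    intro t'
    exact Measurable.lintegral_prod_right'
      (f := fun q : ℝ×ℝ => ENNReal.ofReal |u (q.1, γ q.1 + q.2) - u (t', γ t')|)
      (((m1.sub measurable_const).abs).ennreal_ofReal)
  have hEmeas : ∀ t' : ℝ, Measurable fun t => ENNReal.ofReal |u (t', γ t') - u (t, γ t)| :=
    fun t' => ((measurable_const.sub mcurve).abs).ennreal_ofReal
  have htri : ∀ t' t, φ t ≤ (∫⁻ y in Ioo (0:ℝ) δ, ENNReal.ofReal |u (t, γ t + y) - u (t', γ t')|)
      + ENNReal.ofReal |u (t', γ t') - u (t, γ t)| * ENNReal.ofReal δ := by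
    intro t' t
    calc φ t ≤ ∫⁻ y in Ioo (0:ℝ) δ,
        (ENNReal.ofReal |u (t, γ t + y) - u (t', γ t')|
          + ENNReal.ofReal |u (t', γ t') - u (t, γ t)|) := by
          refine lintegral_mono fun y => ?_
          rw [← ENNReal.ofReal_add (abs_nonneg _) (abs_nonneg _)]
          exact ENNReal.ofReal_le_ofReal (abs_sub_le _ _ _)
      _ = _ := by
          rw [lintegral_add_right _ measurable_const, setLIntegral_const, Real.volume_Ioo,
            sub_zero]
  have hcst : ENNReal.ofReal (1/(2*δ^2)) = (ENNReal.ofReal (2*δ))⁻¹ * (ENNReal.ofReal δ)⁻¹ := by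
    rw [one_div, ENNReal.ofReal_inv_of_pos (by positivity : (0:ℝ) < 2*δ^2),
      show (2*δ^2 : ℝ) = (2*δ)*δ by ring, ENNReal.ofReal_mul (by positivity : (0:ℝ) ≤ 2*δ),
      ENNReal.mul_inv (Or.inl ho20) (Or.inl ho2top)]
  have hper : ∀ t', (ENNReal.ofReal (2*δ))⁻¹ * ∫⁻ t in Ioo (t'-δ) (t'+δ), ρ t
      ≤ ENNReal.ofReal (1/(2*δ^2)) * B t' + (ENNReal.ofReal (2*δ))⁻¹ * G t' := by
    intro t'
    have hstep1 : ∫⁻ t in Ioo (t'-δ) (t'+δ), ρ t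
        = (ENNReal.ofReal δ)⁻¹ * ∫⁻ t in Ioo (t'-δ) (t'+δ), φ t := by
      rw [← lintegral_const_mul _ hφmeas]
    have hGalt : (∫⁻ t in Ioo (t'-δ) (t'+δ), ENNReal.ofReal |u (t', γ t') - u (t, γ t)|)
        = G t' := by
      refine lintegral_congr fun t => ?_
      rw [abs_sub_comm]
    have hstep2 : ∫⁻ t in Ioo (t'-δ) (t'+δ), φ t ≤ B t' + G t' * ENNReal.ofReal δ := by
      calc ∫⁻ t in Ioo (t'-δ) (t'+δ), φ t
          ≤ ∫⁻ t in Ioo (t'-δ) (t'+δ),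
              ((∫⁻ y in Ioo (0:ℝ) δ, ENNReal.ofReal |u (t, γ t + y) - u (t', γ t')|)
                + ENNReal.ofReal |u (t', γ t') - u (t, γ t)| * ENNReal.ofReal δ) :=
            lintegral_mono (htri t')
        _ = (∫⁻ t in Ioo (t'-δ) (t'+δ),
                ∫⁻ y in Ioo (0:ℝ) δ, ENNReal.ofReal |u (t, γ t + y) - u (t', γ t')|)
              + ∫⁻ t in Ioo (t'-δ) (t'+δ),
                ENNReal.ofReal |u (t', γ t') - u (t, γ t)| * ENNReal.ofReal δ :=
            lintegral_add_left (hAmeas t') _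
        _ ≤ B t' + G t' * ENNReal.ofReal δ := by
            refine add_le_add (ballstep u hmeas γ hγm L δ hL hδ hlip t') (le_of_eq ?_)
            rw [lintegral_mul_const _ (hEmeas t'), hGalt]
    calc (ENNReal.ofReal (2*δ))⁻¹ * ∫⁻ t in Ioo (t'-δ) (t'+δ), ρ t
        = (ENNReal.ofReal (2*δ))⁻¹ * ((ENNReal.ofReal δ)⁻¹ * ∫⁻ t in Ioo (t'-δ) (t'+δ), φ t) := by
          rw [hstep1]
      _ ≤ (ENNReal.ofReal (2*δ))⁻¹ * ((ENNReal.ofReal δ)⁻¹ * (B t' + G t' * ENNReal.ofReal δ)) := by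
          exact mul_le_mul_right (mul_le_mul_right hstep2 _) _
      _ = ENNReal.ofReal (1/(2*δ^2)) * B t' + (ENNReal.ofReal (2*δ))⁻¹ * G t' := by
          rw [mul_add, mul_add, hcst]
          congr 1
          · rw [mul_assoc]
          · congr 1
            rw [mul_comm (G t'), ← mul_assoc, ENNReal.inv_mul_cancel hoδ0 hoδtop, one_mul]
  -- finiteness
  have hBle : ∀ t', B t' ≤ ENNReal.ofReal (2*r) * ENNReal.ofReal (2*r) := by
    intro t'
    calc B t' ≤ ∫⁻ _ in Eball (t', γ t') r, 1 := lintegral_mono fun z => habs' _ _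
      _ = volume (Eball (t', γ t') r) := setLIntegral_one _
      _ ≤ _ := volume_Eball_le _ r hrpos
  have hXL_fin : (∫⁻ t' in Ioo (tm+δ) (tp-δ), ENNReal.ofReal (1/(2*δ^2)) * B t') ≠ ⊤ := by
    refine ne_top_of_le_ne_top ?_ (lintegral_mono fun t' => mul_le_mul_right (hBle t') _)
    rw [setLIntegral_const, Real.volume_Ioo]
    exact ENNReal.mul_ne_top
      (ENNReal.mul_ne_top ENNReal.ofReal_ne_top
        (ENNReal.mul_ne_top ENNReal.ofReal_ne_top ENNReal.ofReal_ne_top))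
      ENNReal.ofReal_ne_top
  have hGle : ∀ t, (ENNReal.ofReal (2*δ))⁻¹ * G t ≤ 1 := by
    intro t
    have hG : G t ≤ ENNReal.ofReal (2*δ) := by
      calc G t ≤ ∫⁻ _ in Ioo (t-δ) (t+δ), 1 := lintegral_mono fun s => habs' _ _
        _ = volume (Ioo (t-δ) (t+δ)) := setLIntegral_one _
        _ = ENNReal.ofReal (2*δ) := by rw [Real.volume_Ioo]; congr 1; ring
    calc (ENNReal.ofReal (2*δ))⁻¹ * G t
        ≤ (ENNReal.ofReal (2*δ))⁻¹ * ENNReal.ofReal (2*δ) := mul_le_mul_right hG _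
      _ = 1 := ENNReal.inv_mul_cancel ho20 ho2top
  have hYL_fin : (∫⁻ t in Ioo (tm+δ) (tp-δ), (ENNReal.ofReal (2*δ))⁻¹ * G t) ≠ ⊤ := by
    refine ne_top_of_le_ne_top ?_ (lintegral_mono fun t => hGle t)
    rw [setLIntegral_one, Real.volume_Ioo]
    exact ENNReal.ofReal_ne_top
  -- core chain
  have hcore : ∫⁻ t in Ioo tm tp, ρ t
      ≤ ENNReal.ofReal (2*δ) + ((∫⁻ t' in Ioo (tm+δ) (tp-δ), ENNReal.ofReal (1/(2*δ^2)) * B t')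
          + ∫⁻ t in Ioo (tm+δ) (tp-δ), (ENNReal.ofReal (2*δ))⁻¹ * G t) := by
    refine le_trans (weight ρ hρmeas hρ1 tm tp δ hδ hsmall) (add_le_add le_rfl ?_)
    calc ∫⁻ t' in Ioo (tm+δ) (tp-δ), (ENNReal.ofReal (2*δ))⁻¹ * ∫⁻ t in Ioo (t'-δ) (t'+δ), ρ t
        ≤ ∫⁻ t' in Ioo (tm+δ) (tp-δ),
            (ENNReal.ofReal (1/(2*δ^2)) * B t' + (ENNReal.ofReal (2*δ))⁻¹ * G t') :=
          lintegral_mono fun t' => hper t'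
      _ = _ := lintegral_add_left (hBmeas.const_mul _) _
  -- final assembly
  rw [hconv1, hXconv, hYconv]
  calc (∫⁻ t in Ioo tm tp, ρ t).toReal
      ≤ (ENNReal.ofReal (2*δ) + ((∫⁻ t' in Ioo (tm+δ) (tp-δ), ENNReal.ofReal (1/(2*δ^2)) * B t')
          + ∫⁻ t in Ioo (tm+δ) (tp-δ), (ENNReal.ofReal (2*δ))⁻¹ * G t)).toReal := by
        refine ENNReal.toReal_mono ?_ hcore
        exact ENNReal.add_ne_top.2 ⟨ENNReal.ofReal_ne_top, ENNReal.add_ne_top.2 ⟨hXL_fin, hYL_fin⟩⟩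
    _ = 2*δ + ((∫⁻ t' in Ioo (tm+δ) (tp-δ), ENNReal.ofReal (1/(2*δ^2)) * B t').toReal
          + (∫⁻ t in Ioo (tm+δ) (tp-δ), (ENNReal.ofReal (2*δ))⁻¹ * G t).toReal) := by
        rw [ENNReal.toReal_add ENNReal.ofReal_ne_top (ENNReal.add_ne_top.2 ⟨hXL_fin, hYL_fin⟩),
          ENNReal.toReal_add hXL_fin hYL_fin, ENNReal.toReal_ofReal (by positivity : (0:ℝ) ≤ 2*δ)]
    _ = _ := by ring

/-- The basic trace estimate: for `0 ≤ u ≤ 1` and an `L`-Lipschitz curve `γ̄`,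
`∫ v_δ ≤ 2δ + (double-averaged ball term) + (time-averaged term)`. -/
theorem stmt2 (u : ℝ × ℝ → ℝ) (hmeas : Measurable u)
    (h0 : ∀ p, 0 ≤ u p) (h1 : ∀ p, u p ≤ 1)
    (tm tp L δ : ℝ) (hL : 0 ≤ L) (hδ : 0 < δ) (hsmall : tm + δ ≤ tp - δ)
    (γ : ℝ → ℝ) (hγ : LipschitzOnWith (Real.toNNReal L) γ (Set.Ioo tm tp)) :
    (∫ t in Set.Ioo tm tp,
        (1 / δ) * ∫ y in Set.Ioo (0 : ℝ) δ, |u (t, γ t + y) - u (t, γ t)|)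
      ≤ 2 * δ
        + (∫ t' in Set.Ioo (tm + δ) (tp - δ),
            (1 / (2 * δ ^ 2)) *
              ∫ z in Eball (t', γ t') ((2 + L) * δ), |u z - u (t', γ t')|)
        + ∫ t in Set.Ioo (tm + δ) (tp - δ),
            (1 / (2 * δ)) *
              ∫ t' in Set.Ioo (t - δ) (t + δ), |u (t', γ t') - u (t, γ t)| := by
  obtain ⟨g, hgLip, hEq⟩ := hγ.extend_real
  have hmid : Ioo (tm+δ) (tp-δ) ⊆ Ioo tm tp := fun x hx =>
    ⟨by linarith [hx.1], by linarith [hx.2]⟩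
  have e1 : (∫ t in Set.Ioo tm tp,
        (1/δ) * ∫ y in Set.Ioo (0:ℝ) δ, |u (t, γ t + y) - u (t, γ t)|)
      = ∫ t in Set.Ioo tm tp, (1/δ) * ∫ y in Set.Ioo (0:ℝ) δ, |u (t, g t + y) - u (t, g t)| :=
    setIntegral_congr_fun measurableSet_Ioo fun t ht => by rw [hEq ht]
  have e2 : (∫ t' in Set.Ioo (tm+δ) (tp-δ),
        (1/(2*δ^2)) * ∫ z in Eball (t', γ t') ((2+L)*δ), |u z - u (t', γ t')|)
      = ∫ t' in Set.Ioo (tm+δ) (tp-δ),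
          (1/(2*δ^2)) * ∫ z in Eball (t', g t') ((2+L)*δ), |u z - u (t', g t')| :=
    setIntegral_congr_fun measurableSet_Ioo fun t' ht' => by rw [hEq (hmid ht')]
  have e3 : (∫ t in Set.Ioo (tm+δ) (tp-δ),
        (1/(2*δ)) * ∫ t' in Set.Ioo (t-δ) (t+δ), |u (t', γ t') - u (t, γ t)|)
      = ∫ t in Set.Ioo (tm+δ) (tp-δ),
          (1/(2*δ)) * ∫ t' in Set.Ioo (t-δ) (t+δ), |u (t', g t') - u (t, g t)| := by
    refine setIntegral_congr_fun measurableSet_Ioo fun t ht => ?_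
    have hsub : Ioo (t-δ) (t+δ) ⊆ Ioo tm tp := fun x hx =>
      ⟨by linarith [ht.1, hx.1], by linarith [ht.2, hx.2]⟩
    rw [hEq (hmid ht)]
    congr 1
    exact setIntegral_congr_fun measurableSet_Ioo fun t' ht' => by rw [hEq (hsub ht')]
  rw [e1, e2, e3]
  exact main_aux u hmeas h0 h1 tm tp L δ hL hδ hsmall g hgLip
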